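/- Error estimate for the WKB approximation: for all A ∈ ℂ, ω ∈ ℝ and s ∈ {1, −1}, the function x ↦ √(ξ(x + 1/2)) · (d³/dx³)(A·exp(i·ω·χ(x)) − s·(conj A)·exp(−i·ω·χ(x))) is O(x^(−5/2)) as x → ∞ (the third derivative taken on the interval (−1/2, ∞), where χ is smooth). -/

import Mathlib

/-- ξ(y) = √(y² + 1/16). -/
noncomputable def xi (y : ℝ) : ℝ := Real.sqrt (y ^ 2 + 1 / 16)

/-- χ(x) = log(2·√(4x² + 4x + 1) + √(16x² + 16x + 5)). -/
noncomputable def chi (x : ℝ) : ℝ :=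
  Real.log (2 * Real.sqrt (4 * x ^ 2 + 4 * x + 1) + Real.sqrt (16 * x ^ 2 + 16 * x + 5))

/-!
On `x > -1/2` the phase is `χ(x) = arsinh (4 (x + 1/2))`, so after the shift `y = x + 1/2` it
becomes the entire function `θ(y) = arsinh (4y)`, with `θ' = ξ⁻¹`, `θ'' = -y ξ⁻³` and
`θ''' = -ξ⁻³ + 3 y² ξ⁻⁵`. For purely imaginary `c` the factor `exp (c θ)` has modulus one, and
`(exp (c θ))''' = (c θ''' + 3 c² θ' θ'' + c³ θ'³) exp (c θ)`; since `|y| ≤ ξ(y)` every term is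
`O(ξ⁻³)`. Hence `√ξ · u'''` is `O(ξ^(-5/2))`, and `ξ(x + 1/2) ≥ x`.
-/

open Complex Real Filter Asymptotics

lemma xi_pos (y : ℝ) : 0 < xi y := Real.sqrt_pos.2 (by positivity)

lemma abs_le_xi (y : ℝ) : |y| ≤ xi y := by
  rw [xi, ← Real.sqrt_sq_eq_abs]
  exact Real.sqrt_le_sqrt (by linarith)

lemma abs_mul_inv_xi_le_one (y : ℝ) : |y| * (xi y)⁻¹ ≤ 1 := by
  rw [← div_eq_mul_inv]
  exact div_le_one_of_le₀ (abs_le_xi y) (xi_pos y).le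

lemma hasDerivAt_xi (y : ℝ) : HasDerivAt xi (y / xi y) y := by
  have h := ((hasDerivAt_pow 2 y).add_const (1 / 16 : ℝ)).sqrt (by positivity)
  refine h.congr_deriv ?_
  unfold xi
  field_simp
  ring

lemma sqrt_one_add_four_mul_sq (y : ℝ) : √(1 + (4 * y) ^ 2) = 4 * xi y := by
  rw [xi, show 1 + (4 * y) ^ 2 = 4 ^ 2 * (y ^ 2 + 1 / 16) by ring,
    Real.sqrt_mul (by norm_num), Real.sqrt_sq (by norm_num)]

lemma chi_eq_arsinh {x : ℝ} (hx : -(1 / 2) ≤ x) : chi x = arsinh (4 * (x + 1 / 2)) := by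
  rw [chi, arsinh, sqrt_one_add_four_mul_sq,
    show 4 * x ^ 2 + 4 * x + 1 = (2 * x + 1) ^ 2 by ring, Real.sqrt_sq (by linarith),
    show 16 * x ^ 2 + 16 * x + 5 = 4 ^ 2 * ((x + 1 / 2) ^ 2 + 1 / 16) by ring,
    Real.sqrt_mul (by norm_num), Real.sqrt_sq (by norm_num), xi]
  ring_nf

lemma hasDerivAt_arsinh_four_mul (y : ℝ) :
    HasDerivAt (fun y => arsinh (4 * y)) (xi y)⁻¹ y := by
  refine ((hasDerivAt_id' y).const_mul 4).arsinh.congr_deriv ?_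
  rw [sqrt_one_add_four_mul_sq, smul_eq_mul]
  field_simp [(xi_pos y).ne']

lemma hasDerivAt_inv_xi (y : ℝ) :
    HasDerivAt (fun y => (xi y)⁻¹) (-y * (xi y)⁻¹ ^ 3) y := by
  refine ((hasDerivAt_xi y).inv (xi_pos y).ne').congr_deriv ?_
  field_simp

lemma hasDerivAt_neg_mul_inv_xi_pow_three (y : ℝ) :
    HasDerivAt (fun y => -y * (xi y)⁻¹ ^ 3)
      (-(xi y)⁻¹ ^ 3 + 3 * y ^ 2 * (xi y)⁻¹ ^ 5) y := by
  refine ((hasDerivAt_neg y).mul ((hasDerivAt_inv_xi y).fun_pow 3)).congr_deriv ?_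
  push_cast
  ring

theorem iteratedDeriv_three_cexp_mul {f f₁ f₂ f₃ : ℝ → ℝ} (hf : ∀ x, HasDerivAt f (f₁ x) x)
    (hf₁ : ∀ x, HasDerivAt f₁ (f₂ x) x) (hf₂ : ∀ x, HasDerivAt f₂ (f₃ x) x) (c : ℂ) :
    iteratedDeriv 3 (fun x => cexp (c * f x)) = fun x =>
      (c * f₃ x + 3 * c ^ 2 * f₁ x * f₂ x + c ^ 3 * f₁ x ^ 3) * cexp (c * f x) := by
  have hE : ∀ x, HasDerivAt (fun x => cexp (c * f x)) (c * f₁ x * cexp (c * f x)) x := by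
    intro x
    refine (((hf x).ofReal_comp).const_mul c).cexp.congr_deriv ?_
    ring
  have hE₁ : ∀ x, HasDerivAt (fun x => c * f₁ x * cexp (c * f x))
      ((c * f₂ x + c ^ 2 * f₁ x ^ 2) * cexp (c * f x)) x := by
    intro x
    refine ((((hf₁ x).ofReal_comp).const_mul c).mul (hE x)).congr_deriv ?_
    ring
  have hE₂ : ∀ x, HasDerivAt (fun x => (c * f₂ x + c ^ 2 * f₁ x ^ 2) * cexp (c * f x))
      ((c * f₃ x + 3 * c ^ 2 * f₁ x * f₂ x + c ^ 3 * f₁ x ^ 3) * cexp (c * f x)) x := by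
    intro x
    have h₁ := (hf₁ x).ofReal_comp
    refine ((((hf₂ x).ofReal_comp).const_mul c).fun_add
      ((h₁.fun_pow 2).const_mul (c ^ 2))).mul (hE x) |>.congr_deriv ?_
    push_cast
    ring
  simp only [iteratedDeriv_succ, iteratedDeriv_zero, funext fun x => (hE x).deriv,
    funext fun x => (hE₁ x).deriv, funext fun x => (hE₂ x).deriv]

lemma norm_cubic_jet_le (c : ℂ) {a₁ a₂ a₃ r : ℝ} (h₁ : |a₁| ≤ r) (h₂ : |a₂| ≤ r ^ 2)
    (h₃ : |a₃| ≤ 4 * r ^ 3) :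
    ‖c * a₃ + 3 * c ^ 2 * a₁ * a₂ + c ^ 3 * (a₁ : ℂ) ^ 3‖ ≤
      (4 * ‖c‖ + 3 * ‖c‖ ^ 2 + ‖c‖ ^ 3) * r ^ 3 := by
  calc _ ≤ ‖c‖ * |a₃| + 3 * ‖c‖ ^ 2 * |a₁| * |a₂| + ‖c‖ ^ 3 * |a₁| ^ 3 := by
        refine norm_add₃_le.trans_eq ?_
        simp only [norm_mul, norm_pow, Complex.norm_real, Real.norm_eq_abs, Complex.norm_ofNat]
    _ ≤ ‖c‖ * (4 * r ^ 3) + 3 * ‖c‖ ^ 2 * r * r ^ 2 + ‖c‖ ^ 3 * r ^ 3 := by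
        have hr : 0 ≤ r := (abs_nonneg a₁).trans h₁
        gcongr
    _ = _ := by ring

lemma norm_iteratedDeriv_three_cexp_mul_arsinh_le {c : ℂ} (hc : c.re = 0) (y : ℝ) :
    ‖iteratedDeriv 3 (fun y => cexp (c * arsinh (4 * y))) y‖ ≤
      (4 * ‖c‖ + 3 * ‖c‖ ^ 2 + ‖c‖ ^ 3) * (xi y)⁻¹ ^ 3 := by
  rw [iteratedDeriv_three_cexp_mul hasDerivAt_arsinh_four_mul hasDerivAt_inv_xi
    hasDerivAt_neg_mul_inv_xi_pow_three, norm_mul, Complex.norm_exp, Complex.re_mul_ofReal, hc,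
    zero_mul, Real.exp_zero, mul_one]
  set r := (xi y)⁻¹
  have hr : 0 ≤ r := inv_nonneg.2 (xi_pos y).le
  have hyr : |y| * r ≤ 1 := abs_mul_inv_xi_le_one y
  refine norm_cubic_jet_le c (abs_of_nonneg hr).le ?_ ?_
  · calc |-y * r ^ 3| = |y| * r * r ^ 2 := by rw [abs_mul, abs_neg, abs_pow, abs_of_nonneg hr]; ring
      _ ≤ 1 * r ^ 2 := by gcongr
      _ = r ^ 2 := one_mul _
  · calc |-r ^ 3 + 3 * y ^ 2 * r ^ 5| ≤ r ^ 3 + 3 * (|y| * r) ^ 2 * r ^ 3 := by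
          refine (abs_add_le _ _).trans_eq ?_
          rw [abs_neg, abs_of_nonneg (by positivity), abs_of_nonneg (by positivity), mul_pow,
            sq_abs]
          ring
      _ ≤ r ^ 3 + 3 * 1 ^ 2 * r ^ 3 := by gcongr
      _ = 4 * r ^ 3 := by ring

lemma norm_iteratedDeriv_three_cexp_sub_cexp_le (A B : ℂ) {c : ℂ} (hc : c.re = 0) (y : ℝ) :
    ‖iteratedDeriv 3
        (fun y => A * cexp (c * arsinh (4 * y)) - B * cexp (-(c * arsinh (4 * y)))) y‖ ≤
      (‖A‖ + ‖B‖) * (4 * ‖c‖ + 3 * ‖c‖ ^ 2 + ‖c‖ ^ 3) * (xi y)⁻¹ ^ 3 := by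
  have hθ : ContDiff ℝ 3 (fun y => (arsinh (4 * y) : ℂ)) :=
    ofRealCLM.contDiff.comp (contDiff_arsinh.comp (contDiff_const.mul contDiff_id))
  simp only [← neg_mul]
  rw [iteratedDeriv_fun_sub (contDiff_const.mul (contDiff_const.mul hθ).cexp).contDiffAt
      (contDiff_const.mul (contDiff_const.mul hθ).cexp).contDiffAt, iteratedDeriv_const_mul_field,
    iteratedDeriv_const_mul_field]
  have h₁ := norm_iteratedDeriv_three_cexp_mul_arsinh_le hc y
  have h₂ := norm_iteratedDeriv_three_cexp_mul_arsinh_le (c := -c) (by simp [hc]) y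
  rw [norm_neg] at h₂
  calc _ ≤ ‖A‖ * ‖iteratedDeriv 3 (fun y => cexp (c * arsinh (4 * y))) y‖ +
        ‖B‖ * ‖iteratedDeriv 3 (fun y => cexp (-c * arsinh (4 * y))) y‖ := by
        refine (norm_sub_le _ _).trans_eq ?_
        rw [norm_mul, norm_mul]
    _ ≤ ‖A‖ * ((4 * ‖c‖ + 3 * ‖c‖ ^ 2 + ‖c‖ ^ 3) * (xi y)⁻¹ ^ 3) +
        ‖B‖ * ((4 * ‖c‖ + 3 * ‖c‖ ^ 2 + ‖c‖ ^ 3) * (xi y)⁻¹ ^ 3) := by gcongr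
    _ = _ := by ring

lemma iteratedDeriv_comp_chi (n : ℕ) (g : ℝ → ℂ) {x : ℝ} (hx : -(1 / 2) < x) :
    iteratedDeriv n (fun t => g (chi t)) x =
      iteratedDeriv n (fun y => g (arsinh (4 * y))) (x + 1 / 2) := by
  rw [← congrFun (iteratedDeriv_comp_add_const n (fun y => g (arsinh (4 * y))) (1 / 2)) x]
  refine Filter.EventuallyEq.iteratedDeriv_eq n ?_
  filter_upwards [Ioi_mem_nhds hx] with t ht
  rw [chi_eq_arsinh (le_of_lt ht)]

lemma le_xi_add_half (x : ℝ) : x ≤ xi (x + 1 / 2) :=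
  calc x ≤ x + 1 / 2 := by linarith
    _ ≤ xi (x + 1 / 2) := (le_abs_self _).trans (abs_le_xi _)

lemma sqrt_mul_inv_pow_three {η : ℝ} (hη : 0 < η) : √η * η⁻¹ ^ 3 = η ^ (-(5 : ℝ) / 2) := by
  rw [Real.sqrt_eq_rpow, ← Real.rpow_natCast, ← Real.rpow_neg_one, ← Real.rpow_mul hη.le,
    ← Real.rpow_add hη]
  norm_num

theorem wkb_error_isBigO_general (A : ℂ) (ω s : ℝ) :
    Asymptotics.IsBigO Filter.atTop
      (fun x : ℝ => (Real.sqrt (xi (x + 1/2)) : ℂ) *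
        iteratedDeriv 3 (fun t : ℝ =>
          A * Complex.exp (Complex.I * ω * chi t) -
            (s : ℂ) * (starRingEnd ℂ) A * Complex.exp (-(Complex.I * ω * chi t))) x)
      (fun x : ℝ => x ^ (-(5 : ℝ)/2)) := by
  set c : ℂ := Complex.I * ω
  set B : ℂ := (s : ℂ) * (starRingEnd ℂ) A
  set K := (‖A‖ + ‖B‖) * (4 * ‖c‖ + 3 * ‖c‖ ^ 2 + ‖c‖ ^ 3)
  refine IsBigO.of_bound K ?_
  filter_upwards [eventually_gt_atTop 0] with x hx
  set η := xi (x + 1 / 2)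
  have hη : 0 < η := xi_pos _
  rw [iteratedDeriv_comp_chi 3 (fun θ : ℝ => A * cexp (c * θ) - B * cexp (-(c * θ))) (by linarith),
    norm_mul, Complex.norm_real, Real.norm_of_nonneg (Real.sqrt_nonneg _),
    Real.norm_of_nonneg (Real.rpow_nonneg hx.le _)]
  calc √η * _ ≤ √η * (K * η⁻¹ ^ 3) := by
        gcongr
        exact norm_iteratedDeriv_three_cexp_sub_cexp_le A B (c := c) (by simp [c]) (x + 1 / 2)
    _ = K * η ^ (-(5 : ℝ) / 2) := by rw [← sqrt_mul_inv_pow_three hη]; ring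
    _ ≤ K * x ^ (-(5 : ℝ) / 2) := mul_le_mul_of_nonneg_left
        (Real.rpow_le_rpow_of_nonpos hx (le_xi_add_half x) (by norm_num)) (by positivity)

/-- Error estimate for the WKB approximation: for s = ±1 the function
x ↦ √(ξ(x+1/2)) · u_s'''(x), with u_s(x) = A·exp(i·ω·χ(x)) − s·(conj A)·exp(−i·ω·χ(x)),
is O(x^(−5/2)) as x → ∞. -/
theorem wkb_error_isBigO (A : ℂ) (ω s : ℝ) (hs : s = 1 ∨ s = -1) :
    Asymptotics.IsBigO Filter.atTop
      (fun x : ℝ => (Real.sqrt (xi (x + 1/2)) : ℂ) *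
        iteratedDeriv 3 (fun t : ℝ =>
          A * Complex.exp (Complex.I * ω * chi t) -
            (s : ℂ) * (starRingEnd ℂ) A * Complex.exp (-(Complex.I * ω * chi t))) x)
      (fun x : ℝ => x ^ (-(5 : ℝ)/2)) :=
  wkb_error_isBigO_general A ω s
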